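/- arXiv:1711.06555 — 6 statements merged into one kernel-verified Lean document; each statement's English description precedes it below -/
import Mathlib

section
/- The function $f(t) = t\,q(t)$, where $q(t) = (t-\sqrt{t^2-4})/2$, is strictly decreasing on $(2, \infty)$, and $f(t) > 1$ for all $t > 2$. -/
noncomputable def q (t : ℝ) : ℝ := (t - Real.sqrt (t ^ 2 - 4)) / 2

noncomputable def u : ℕ → ℝ → ℝ
  | 0, _ => 1
  | 1, x => x
  | (n + 2), x => x * u (n + 1) x - u n x

/-! Rationalising, `t q(t) = 2t / (t + √(t² - 4)) = 2 / (1 + √(1 - 4/t²))`. As `t` grows,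
`√(1 - 4/t²)` increases strictly from `0` towards `1`, so `t q(t)` decreases strictly
and stays above `2 / (1 + 1) = 1`. -/

open Real

lemma one_sub_four_div_sq_nonneg {t : ℝ} (ht : 2 ≤ t) : 0 ≤ 1 - 4 / t ^ 2 := by
  rw [sub_nonneg, div_le_one (by positivity)]
  nlinarith

lemma mul_q_eq {t : ℝ} (ht : 2 ≤ t) : t * q t = 2 / (1 + √(1 - 4 / t ^ 2)) := by
  have ht0 : 0 < t := by linarith
  have hsqrt : √(t ^ 2 - 4) = t * √(1 - 4 / t ^ 2) := by
    rw [← sqrt_sq ht0.le, ← sqrt_mul (sq_nonneg t), sqrt_sq ht0.le]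
    congr 1
    field_simp
  set s := √(1 - 4 / t ^ 2)
  have hs : s ^ 2 = 1 - 4 / t ^ 2 := sq_sqrt (one_sub_four_div_sq_nonneg ht)
  rw [q, hsqrt, eq_div_iff (by positivity)]
  field_simp at hs ⊢
  nlinarith

lemma sqrt_one_sub_four_div_sq_strictMonoOn :
    StrictMonoOn (fun t : ℝ => √(1 - 4 / t ^ 2)) (Set.Ioi 2) := by
  intro a ha b hb hab
  simp only [Set.mem_Ioi] at ha hb
  have h4 : 4 / b ^ 2 < 4 / a ^ 2 :=
    div_lt_div_of_pos_left four_pos (by positivity) (pow_lt_pow_left₀ hab (by linarith) two_ne_zero)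
  exact sqrt_lt_sqrt (one_sub_four_div_sq_nonneg ha.le) (by linarith)

lemma sqrt_one_sub_four_div_sq_lt_one {t : ℝ} (ht : 2 < t) : √(1 - 4 / t ^ 2) < 1 := by
  rw [sqrt_lt' one_pos]
  have : 0 < 4 / t ^ 2 := by positivity
  linarith

theorem stmt4 :
    StrictAntiOn (fun t : ℝ => t * q t) (Set.Ioi 2) ∧
    ∀ t : ℝ, 2 < t → 1 < t * q t := by
  constructor
  · intro a ha b hb hab
    simp only [mul_q_eq ha.le, mul_q_eq hb.le]
    exact div_lt_div_of_pos_left two_pos (by positivity)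
      (by linarith [sqrt_one_sub_four_div_sq_strictMonoOn ha hb hab])
  · intro t ht
    rw [mul_q_eq ht.le, lt_div_iff₀ (by positivity)]
    linarith [sqrt_one_sub_four_div_sq_lt_one ht]
end

section
/- Let $\tau > 0$ and define $f(t) = \tau^2/(2t(t+\tau)^2)$, $g(t) = \frac{16}{5}\cdot\frac{1}{t^3(t^2-4)}$ for $t > 2$, and $C(\tau) = \frac{2}{\tau\sqrt{5}}(2 + \sqrt{2 + 9\tau^2})$. Then $f(t) \geq g(t)$ for all $t \geq C(\tau)$. -/
theorem stmt6 (τ : ℝ) (hτ : 0 < τ) (t : ℝ)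
    (ht : 2 / (τ * Real.sqrt 5) * (2 + Real.sqrt (2 + 9 * τ ^ 2)) ≤ t) :
    (16 : ℝ) / 5 * (1 / (t ^ 3 * (t ^ 2 - 4))) ≤ τ ^ 2 / (2 * t * (t + τ) ^ 2) := by
  set s := Real.sqrt 5 with hs
  set r := Real.sqrt (2 + 9 * τ ^ 2) with hr
  have hs0 : 0 < s := Real.sqrt_pos.mpr (by norm_num)
  have hs2 : s ^ 2 = 5 := Real.sq_sqrt (by norm_num)
  have hr0 : 0 ≤ r := Real.sqrt_nonneg _
  have hr2 : r ^ 2 = 2 + 9 * τ ^ 2 := Real.sq_sqrt (by positivity)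
  have hr4 : 1 + 2 * τ ≤ r := by nlinarith [sq_nonneg (5 * τ - 2), sq_nonneg (r - (1 + 2 * τ))]
  have h1 : 2 * (2 + r) ≤ t * (τ * s) := by
    rw [div_mul_eq_mul_div] at ht
    exact (div_le_iff₀ (by positivity)).mp ht
  have hr3 : 3 * τ ≤ r := by nlinarith [sq_nonneg (r - 3 * τ)]
  have hs3 : s < 3 := by nlinarith
  have ht2 : 2 < t := by nlinarith [mul_pos hτ hs0]
  have ht0 : 0 < t := by linarith
  have h5 : 0 ≤ 5 * τ ^ 2 * t ^ 2 - 8 * (τ * s * t) + 8 - 36 * τ ^ 2 := by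
    nlinarith [sq_nonneg (t * (τ * s) - 4 - 2 * r)]
  have hF2 : 0 ≤ (5 * τ ^ 2 * t ^ 2 - 8 * (τ * s * t) + 8 - 36 * τ ^ 2) * t ^ 2 :=
    mul_nonneg h5 (sq_nonneg t)
  have hF1 : (2 * (2 + r)) * t ^ 2 ≤ (t * (τ * s)) * t ^ 2 :=
    mul_le_mul_of_nonneg_right h1 (sq_nonneg t)
  have key : 32 * (t + τ) ^ 2 ≤ 5 * τ ^ 2 * t ^ 2 * (t ^ 2 - 4) := by
    nlinarith [mul_nonneg (mul_nonneg hτ.le ht0.le) (by linarith : (0:ℝ) ≤ t - 2),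
      mul_nonneg (sq_nonneg τ) (by nlinarith : (0:ℝ) ≤ t ^ 2 - 4),
      mul_le_mul_of_nonneg_right hr4 (sq_nonneg t)]
  have hden1 : 0 < t ^ 3 * (t ^ 2 - 4) := by
    apply mul_pos (by positivity); nlinarith
  have hden2 : 0 < 2 * t * (t + τ) ^ 2 := by positivity
  rw [mul_one_div, div_le_div_iff₀ hden1 hden2]
  have := mul_le_mul_of_nonneg_left key ht0.le
  nlinarith [this]
end

section
/- For $0 < \tau \leq 4$ and $N \geq \tau + C(\tau)$ where $C(\tau) = \frac{2}{\tau\sqrt{5}}(2+\sqrt{2+9\tau^2})$, we have $q(N-\tau)(1 - q(N-\tau)^2) \geq e^{\tau/N}/N$, where $q(t) = (t-\sqrt{t^2-4})/2$. -/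
open Real

section q

variable {t : ℝ}

lemma sqrt_sq_sub_four_lt (ht : 2 ≤ t) : √(t ^ 2 - 4) < t := by
  rw [sqrt_lt' (by linarith)]
  linarith

lemma q_pos (ht : 2 ≤ t) : 0 < q t := by
  have := sqrt_sq_sub_four_lt ht
  unfold q
  linarith

lemma mul_q_eq_one_add_q_sq (ht : 4 ≤ t ^ 2) : t * q t = 1 + q t ^ 2 := by
  have hs := sq_sqrt (sub_nonneg.2 ht)
  unfold q
  linear_combination -hs / 4

lemma q_mul_sqrt_le_one (ht : 2 ≤ t) : q t * √(t ^ 2 - 4) ≤ 1 := by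
  have hs := sq_sqrt (by nlinarith : (0 : ℝ) ≤ t ^ 2 - 4)
  have hs0 := sqrt_nonneg (t ^ 2 - 4)
  unfold q
  nlinarith [sq_nonneg (t * √(t ^ 2 - 4) - (t ^ 2 - 2))]

lemma mul_q_mul_one_sub_q_sq (ht : 4 ≤ t ^ 2) :
    t * (q t * (1 - q t ^ 2)) = 1 - q t ^ 4 := by
  linear_combination (1 - q t ^ 2) * mul_q_eq_one_add_q_sq ht

lemma q_pow_four_mul_sq_le_one (ht : 2 ≤ t) : q t ^ 4 * (t ^ 2 - 4) ^ 2 ≤ 1 := by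
  have hs := sq_sqrt (by nlinarith : (0 : ℝ) ≤ t ^ 2 - 4)
  calc q t ^ 4 * (t ^ 2 - 4) ^ 2 = (q t * √(t ^ 2 - 4)) ^ 4 := by
        linear_combination (-q t ^ 4 * (√(t ^ 2 - 4) ^ 2 + t ^ 2 - 4)) * hs
    _ ≤ 1 := pow_le_one₀ (mul_nonneg (q_pos ht).le (sqrt_nonneg _)) (q_mul_sqrt_le_one ht)

end q

lemma exp_mul_one_sub_le {x : ℝ} (hx : 0 ≤ x) : exp x * (1 - x) ≤ 1 - x ^ 2 / 2 := by
  let g : ℝ → ℝ := fun y ↦ 1 - y ^ 2 / 2 - exp y * (1 - y)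
  have hg : ∀ y, HasDerivAt g (y * (exp y - 1)) y := by
    intro y
    have := (((hasDerivAt_pow 2 y).div_const 2).const_sub 1).sub
      ((hasDerivAt_exp y).mul ((hasDerivAt_id y).const_sub 1))
    exact this.congr_deriv (by simp; ring)
  have hmono : MonotoneOn g (Set.Ici 0) := by
    refine monotoneOn_of_deriv_nonneg (convex_Ici 0) ?_ ?_ ?_
    · exact fun y _ ↦ (hg y).continuousAt.continuousWithinAt
    · exact fun y _ ↦ (hg y).differentiableAt.differentiableWithinAt
    · intro y hy
      rw [interior_Ici, Set.mem_Ioi] at hy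
      rw [(hg y).deriv]
      exact mul_nonneg hy.le (by linarith [add_one_le_exp y])
  simpa [g] using hmono Set.self_mem_Ici hx hx

/-- The constant `C(τ)` of the paper. -/
noncomputable def threshold (τ : ℝ) : ℝ := 2 / (τ * √5) * (2 + √(2 + 9 * τ ^ 2))

lemma threshold_pos {τ : ℝ} (hτ : 0 < τ) : 0 < threshold τ := by
  unfold threshold; positivity

lemma sqrt_two_mul_add_le_of_threshold_le {τ t : ℝ} (hτ : 0 < τ) (ht : threshold τ ≤ t) :
    √2 * (t + τ) ≤ τ * (t ^ 2 - 4) := by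
  set b := √(2 + 9 * τ ^ 2)
  set P := τ * threshold τ
  have hb0 : 0 ≤ b := sqrt_nonneg _
  have hb2 : b ^ 2 = 2 + 9 * τ ^ 2 := sq_sqrt (by positivity)
  have h5 : √5 ^ 2 = 5 := sq_sqrt (by norm_num)
  have h2 : √2 ^ 2 = 2 := sq_sqrt (by norm_num)
  have h5l : 2.23 ≤ √5 := by nlinarith [sqrt_nonneg 5]
  have h2u : √2 ≤ 1.42 := by nlinarith [sqrt_nonneg 2]
  have h2l : 1.41 ≤ √2 := by nlinarith [sqrt_nonneg 2]
  have hP : P * √5 = 4 + 2 * b := by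
    simp only [P, threshold, b]; field_simp; ring
  have hP0 : 0 ≤ P := by unfold P threshold; positivity
  have hPt : P ≤ τ * t := mul_le_mul_of_nonneg_left ht hτ.le
  have hP2 : √2 ≤ P := by nlinarith
  -- `y ↦ y² - √2 y` is increasing for `y ≥ √2 / 2`, and at `y = P` it already exceeds `(4 + √2) τ²`.
  have hPτ : √2 * P + (4 + √2) * τ ^ 2 ≤ P ^ 2 := by
    nlinarith [mul_le_mul_of_nonneg_right h5l hP0]
  nlinarith [mul_nonneg (sub_nonneg.2 hPt) (by linarith : 0 ≤ τ * t + P - √2)]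

theorem stmt8_general (τ N : ℝ) (hτ0 : 0 < τ)
    (hN : τ + 2 / (τ * Real.sqrt 5) * (2 + Real.sqrt (2 + 9 * τ ^ 2)) ≤ N) :
    Real.exp (τ / N) / N ≤ q (N - τ) * (1 - q (N - τ) ^ 2) := by
  set t := N - τ
  have hCt : threshold τ ≤ t := by unfold threshold; linarith
  have hquad : √2 * N ≤ τ * (t ^ 2 - 4) := by
    simpa [t] using sqrt_two_mul_add_le_of_threshold_le hτ0 hCt
  have ht0 : 0 < t := (threshold_pos hτ0).trans_le hCt
  have hN0 : 0 < N := by linarith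
  have ht4 : 0 < t ^ 2 - 4 := pos_of_mul_pos_right ((by positivity : 0 < √2 * N).trans_le hquad) hτ0.le
  have ht2 : 2 ≤ t := by nlinarith
  set x := τ / N with hx
  have htx : t = N * (1 - x) := by rw [hx]; field_simp; ring
  have hqx : q t ^ 4 ≤ x ^ 2 / 2 := by
    rw [hx, div_pow, le_div_iff₀ two_pos, le_div_iff₀ (by positivity)]
    calc q t ^ 4 * 2 * N ^ 2 = q t ^ 4 * (√2 * N) ^ 2 := by
          rw [mul_pow, sq_sqrt zero_le_two]; ring
      _ ≤ q t ^ 4 * (τ * (t ^ 2 - 4)) ^ 2 := by gcongr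
      _ = τ ^ 2 * (q t ^ 4 * (t ^ 2 - 4) ^ 2) := by ring
      _ ≤ τ ^ 2 := mul_le_of_le_one_right (sq_nonneg τ) (q_pow_four_mul_sq_le_one ht2)
  have hx1 : 0 < 1 - x := by nlinarith
  calc exp x / N = exp x * (1 - x) / t := by rw [htx]; field_simp
    _ ≤ (1 - x ^ 2 / 2) / t := by gcongr; exact exp_mul_one_sub_le (by positivity)
    _ ≤ (1 - q t ^ 4) / t := by gcongr
    _ = q t * (1 - q t ^ 2) := by
      rw [← mul_q_mul_one_sub_q_sq (by nlinarith), mul_div_cancel_left₀ _ ht0.ne']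

theorem stmt8 (τ N : ℝ) (hτ0 : 0 < τ) (hτ4 : τ ≤ 4)
    (hN : τ + 2 / (τ * Real.sqrt 5) * (2 + Real.sqrt (2 + 9 * τ ^ 2)) ≤ N) :
    Real.exp (τ / N) / N ≤ q (N - τ) * (1 - q (N - τ) ^ 2) :=
  stmt8_general τ N hτ0 hN
end

section
/- For $t > 2$ with series coefficients $a_n = \frac{1}{n 4^{n-1}}\binom{2n-3}{n-1}$ ($n \geq 2$), the coefficients $b_n = 2a_n(n-2)/(n+1)$ satisfy $b_n \leq 1/10$ for all $n \geq 3$, and consequently $q(t)(1-q(t)^2) \geq \frac{1}{t} - \frac{16}{5}\cdot\frac{1}{t^3(t^2-4)}$, where $q(t) = (t-\sqrt{t^2-4})/2$. -/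
noncomputable def a : ℕ → ℝ
  | 0 => 1
  | 1 => 1 / 2
  | n => (Nat.choose (2 * n - 3) (n - 1) : ℝ) / (n * 4 ^ (n - 1))

lemma choose_le_two_pow' (n k : ℕ) : n.choose k ≤ 2 ^ n := by
  rcases le_or_gt k n with h | h
  · rw [← Nat.sum_range_choose n]
    exact Finset.single_le_sum (f := fun m => n.choose m) (fun _ _ => Nat.zero_le _)
      (Finset.mem_range.mpr (Nat.lt_succ_of_le h))
  · simp [Nat.choose_eq_zero_of_lt h]

theorem stmt10 :
    (∀ n : ℕ, 3 ≤ n → 2 * a n * (n - 2) / (n + 1) ≤ 1 / 10) ∧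
    ∀ t : ℝ, 2 < t →
      1 / t - 16 / 5 * (1 / (t ^ 3 * (t ^ 2 - 4))) ≤ q t * (1 - q t ^ 2) := by
  constructor
  · intro n hn
    obtain ⟨m, rfl⟩ : ∃ m, n = m + 3 := ⟨n - 3, by omega⟩
    have ha : a (m+3) = (Nat.choose (2*(m+3)-3) (m+2) : ℝ) / ((m+3) * 4 ^ (m+2)) := by
      simp [a]
    have hC : ((Nat.choose (2*(m+3)-3) (m+2) : ℕ) : ℝ) ≤ 8 * 4 ^ m := by
      calc ((Nat.choose (2*(m+3)-3) (m+2) : ℕ) : ℝ) ≤ ((2 ^ (2*(m+3)-3) : ℕ) : ℝ) := by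
            exact_mod_cast choose_le_two_pow' _ _
        _ = 8 * 4 ^ m := by
            have h : 2*(m+3)-3 = 2*m + 3 := by omega
            rw [h]
            push_cast
            rw [pow_add, pow_mul]
            ring
    have h4 : (0:ℝ) < 4 ^ m := by positivity
    have hm0 : (0:ℝ) ≤ (m:ℝ) := Nat.cast_nonneg m
    have hkey : (((m:ℝ)+3) - 2) * 10 ≤ ((m:ℝ)+3) * (((m:ℝ)+3)+1) := by
      have h12 : ((m:ℝ) - 1) * ((m:ℝ) - 2) ≥ 0 := by
        rcases le_or_gt m 1 with h | h
        · interval_cases m <;> norm_num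
        · have : (2:ℝ) ≤ (m:ℝ) := by exact_mod_cast h
          nlinarith
      nlinarith
    rw [ha]
    push_cast
    set C : ℝ := ((2 * (m + 3) - 3).choose (m + 2) : ℝ) with hCdef
    have hC0 : (0:ℝ) ≤ C := Nat.cast_nonneg _
    have hpos : (0:ℝ) < ((m:ℝ)+3) * (4:ℝ)^(m+2) := by positivity
    have hrw : 2 * (C / (((m:ℝ)+3) * 4 ^ (m+2))) * (((m:ℝ)+3) - 2) / (((m:ℝ)+3) + 1)
        = (2 * C * (((m:ℝ)+3) - 2)) / ((((m:ℝ)+3) * 4 ^ (m+2)) * (((m:ℝ)+3) + 1)) := by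
      field_simp
    rw [hrw, div_le_div_iff₀ (by positivity) (by norm_num)]
    have h4e : (4:ℝ) ^ (m+2) = 16 * 4 ^ m := by rw [pow_add]; ring
    rw [h4e]
    nlinarith [mul_le_mul_of_nonneg_right hC (by linarith : (0:ℝ) ≤ ((m:ℝ)+3-2) * 10),
      mul_le_mul_of_nonneg_right hkey (le_of_lt h4), mul_nonneg hC0 hm0]
  · intro t ht
    set s := Real.sqrt (t ^ 2 - 4) with hsdef
    have hts : (0:ℝ) < t ^ 2 - 4 := by nlinarith
    have hs0 : 0 ≤ s := Real.sqrt_nonneg _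
    have hs2 : s ^ 2 = t ^ 2 - 4 := Real.sq_sqrt (le_of_lt hts)
    have ht0 : (0:ℝ) < t := by linarith
    have hD : (0:ℝ) < t^4 - 4*t^2 + 2 := by nlinarith
    set D : ℝ := t^4 - 4*t^2 + 2 with hDdef
    set y : ℝ := t * (t^2 - 2) * s with hydef
    have hy0 : 0 ≤ y := by
      apply mul_nonneg _ hs0
      nlinarith
    have hy2 : y ^ 2 = D ^ 2 - 4 := by
      rw [hydef, hDdef]
      nlinarith [hs2]
    have hyD : y ≤ D := by nlinarith
    have h5 : D * (D - y) ≤ 4 := by nlinarith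
    have hT : (0:ℝ) < t^2 * (t^2-4) := by positivity
    have hpoly : 20 * (t^2 * (t^2-4)) ≤ 32 * D := by rw [hDdef]; nlinarith [sq_nonneg (t^2-2)]
    have hN : 5 * t^2 * (t^2-4) * (D - y) ≤ 32 := by
      nlinarith [mul_le_mul_of_nonneg_left h5 (by positivity : (0:ℝ) ≤ 5 * (t^2 * (t^2-4))),
        mul_pos hD hD]
    have hq : q t * (1 - q t ^ 2) = ((t^2 - 2) * s - t * (t^2 - 4)) / 2 := by
      rw [q, ← hsdef]
      nlinarith [hs2]
    rw [hq]
    have hnum : ((t^2 - 2) * s - t * (t^2 - 4)) / 2 - (1 / t - 16 / 5 * (1 / (t ^ 3 * (t ^ 2 - 4))))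
        = (32 - 5 * t^2 * (t^2-4) * (D - y)) / (10 * t^3 * (t^2 - 4)) := by
      rw [hDdef, hydef]
      field_simp
      ring
    have hfinal : 0 ≤ ((t^2 - 2) * s - t * (t^2 - 4)) / 2
        - (1 / t - 16 / 5 * (1 / (t ^ 3 * (t ^ 2 - 4)))) := by
      rw [hnum]
      apply div_nonneg (by linarith) (by positivity)
    linarith
end

section
/- For $t > 2$ and $\tau > 0$: $\frac{1}{t} - \frac{e^{\tau/(t+\tau)}}{t+\tau} \geq \frac{\tau^2}{2t(t+\tau)^2}$. -/
lemma Real.exp_le_one_add_add_sq_div_two_add_cube_div_two {x : ℝ} (h0 : 0 ≤ x) (h1 : x ≤ 1) :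
    Real.exp x ≤ 1 + x + x ^ 2 / 2 + x ^ 3 / 2 := by
  have h := Real.exp_bound' h0 h1 (n := 3) (by norm_num)
  simp only [Finset.sum_range_succ, Finset.sum_range_zero] at h
  norm_num [Nat.factorial] at h
  nlinarith [pow_nonneg h0 3]

lemma inv_sub_cubic_div_eq {t τ : ℝ} (ht : t ≠ 0) (hs : t + τ ≠ 0) :
    1 / t - (1 + τ / (t + τ) + (τ / (t + τ)) ^ 2 / 2 + (τ / (t + τ)) ^ 3 / 2) / (t + τ) =
      τ ^ 2 / (2 * t * (t + τ) ^ 2) + τ ^ 4 / (2 * t * (t + τ) ^ 4) := by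
  field_simp
  ring

theorem stmt11 (t τ : ℝ) (ht : 2 < t) (hτ : 0 < τ) :
    τ ^ 2 / (2 * t * (t + τ) ^ 2) ≤ 1 / t - Real.exp (τ / (t + τ)) / (t + τ) := by
  have ht0 : 0 < t := by linarith
  have hs : 0 < t + τ := by linarith
  have hx1 : τ / (t + τ) ≤ 1 := (div_le_one hs).mpr (by linarith)
  calc τ ^ 2 / (2 * t * (t + τ) ^ 2)
      ≤ τ ^ 2 / (2 * t * (t + τ) ^ 2) + τ ^ 4 / (2 * t * (t + τ) ^ 4) :=
        le_add_of_nonneg_right (by positivity)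
    _ = 1 / t - (1 + τ / (t + τ) + (τ / (t + τ)) ^ 2 / 2 + (τ / (t + τ)) ^ 3 / 2) / (t + τ) :=
        (inv_sub_cubic_div_eq ht0.ne' hs.ne').symm
    _ ≤ 1 / t - Real.exp (τ / (t + τ)) / (t + τ) := by
        gcongr
        exact Real.exp_le_one_add_add_sq_div_two_add_cube_div_two (by positivity) hx1
end

section
/- For $N > 2$ and $t > 2$ with $t < N$, the sequence $n \mapsto u_n(t)/u_n(N)$ is strictly decreasing, where $u_n$ are the dilated Chebyshev polynomials of the second kind. -/
lemma u_pos_mono (x : ℝ) (hx : 2 < x) : ∀ n, 0 < u n x ∧ u n x ≤ u (n + 1) x := by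
  intro n
  induction n using Nat.strong_induction_on with
  | _ n ih =>
    match n with
    | 0 => simp [u]; linarith
    | 1 =>
      have : u 2 x = x * x - 1 := by simp [u]
      constructor
      · simp [u]; linarith
      · rw [show (1:ℕ)+1 = 2 from rfl, this, show u 1 x = x from rfl]; nlinarith
    | (m + 2) =>
      obtain ⟨h1, h2⟩ := ih (m + 1) (by omega)
      obtain ⟨h0, h02⟩ := ih m (by omega)
      have e1 : u (m + 2) x = x * u (m + 1) x - u m x := rfl
      have e2 : u (m + 3) x = x * u (m + 2) x - u (m + 1) x := rfl
      constructor
      · rw [e1]; nlinarith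
      · rw [show m + 2 + 1 = m + 3 from rfl, e2, e1]; nlinarith

lemma cross (N t : ℝ) (hN : 2 < N) (ht : 2 < t) (htN : t < N) :
    ∀ n, u (n + 1) t * u n N < u (n + 1) N * u n t := by
  intro n
  induction n with
  | zero => simp [u]; linarith
  | succ m ih =>
    have pt := (u_pos_mono t ht (m + 1)).1
    have pN := (u_pos_mono N hN (m + 1)).1
    have e1 : u (m + 2) t = t * u (m + 1) t - u m t := rfl
    have e2 : u (m + 2) N = N * u (m + 1) N - u m N := rfl
    rw [e1, e2]
    nlinarith [mul_pos pt pN]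

theorem stmt17 (N t : ℝ) (hN : 2 < N) (ht : 2 < t) (htN : t < N) :
    StrictAnti (fun n : ℕ => u n t / u n N) := by
  apply strictAnti_nat_of_succ_lt
  intro n
  have pN := (u_pos_mono N hN n).1
  have pN1 := (u_pos_mono N hN (n + 1)).1
  have h := cross N t hN ht htN n
  show u (n+1) t / u (n+1) N < u n t / u n N
  rw [div_lt_div_iff₀ pN1 pN]
  nlinarith
end
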